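/- (Lemma 1, variance.) For all natural numbers b ≥ 1 and N ≥ b + 2, letting m = ∫₀^∞ N·log(1 + b x/(N−b−1)) f_{b, N−b−1}(x) dx, the quantity ∫₀^∞ (N·log(1 + b x/(N−b−1)))^2 f_{b, N−b−1}(x) dx − m^2 equals N^2 · (ψ′((N−b−1)/2) − ψ′((N−1)/2)). -/

import Mathlib

open MeasureTheory

/-- Digamma function `ψ(x) = d/dx log Γ(x)`. -/
noncomputable def digamma (x : ℝ) : ℝ :=
  deriv (fun y => Real.log (Real.Gamma y)) x

/-- Trigamma function `ψ′(x) = d²/dx² log Γ(x)`. -/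
noncomputable def trigamma (x : ℝ) : ℝ :=
  deriv (deriv (fun y => Real.log (Real.Gamma y))) x

/-- Density of the F-distribution with degrees of freedom `(a, b)`. -/
noncomputable def fDensity (a b x : ℝ) : ℝ :=
  (Real.Gamma ((a + b) / 2) / (Real.Gamma (a / 2) * Real.Gamma (b / 2))) *
    (a / b) ^ (a / 2) * x ^ (a / 2 - 1) * (1 + a * x / b) ^ (-((a + b) / 2))

/-!
With `q = a/2`, `s = c/2` and `Kₖ(s) = ∫₀¹ (log t)ᵏ t^(s-1) (1-t)^(q-1) dt` (`logBetaIntegral`),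
the substitution `x = (c/a)(1/t - 1)` carries the `F(a, c)` law to the `Beta(s, q)` law and
`log (1 + a x / c)` to `-log t`, so the `k`-th moment of `log (1 + a x / c)` is `(-1)ᵏ Kₖ(s) / K₀(s)`.
Viewing `Kₖ` as a Mellin transform and differentiating under the integral gives `Kₖ' = Kₖ₊₁`,
while `K₀(s) = B(s, q) = Γ(s) Γ(q) / Γ(s + q)`. Hence the variance `(K₂ K₀ - K₁²) / K₀²` is
`(log K₀)'' = ψ'(s) - ψ'(s + q)`.
-/

open Set Filter Asymptotics Topology Real

lemma Real.analyticAt_Gamma {x : ℝ} (hx : 0 < x) : AnalyticAt ℝ Gamma x := by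
  have hC : AnalyticAt ℂ Complex.Gamma x := by
    have hΓ : Complex.Gamma x ≠ 0 := by
      simpa [Complex.Gamma_ofReal] using (Gamma_pos_of_pos hx).ne'
    have := (Complex.differentiable_one_div_Gamma.analyticAt (x : ℂ)).inv (inv_ne_zero hΓ)
    simpa [Pi.inv_def] using this
  simpa [Function.comp_def, Complex.Gamma_ofReal] using
    (Complex.reCLM.analyticAt _).comp (hC.restrictScalars.comp (Complex.ofRealCLM.analyticAt x))

lemma analyticOnNhd_log_Gamma : AnalyticOnNhd ℝ (fun y => log (Gamma y)) (Ioi 0) :=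
  fun _ hx => (analyticAt_Gamma hx).log (Gamma_pos_of_pos hx)

lemma hasDerivAt_log_Gamma {x : ℝ} (hx : 0 < x) :
    HasDerivAt (fun y => log (Gamma y)) (digamma x) x :=
  (analyticOnNhd_log_Gamma x hx).differentiableAt.hasDerivAt

lemma hasDerivAt_digamma {x : ℝ} (hx : 0 < x) : HasDerivAt digamma (trigamma x) x :=
  (analyticOnNhd_log_Gamma.deriv x hx).differentiableAt.hasDerivAt

lemma abs_log_pow_le {t : ℝ} (ht : 0 < t) (ht1 : t ≤ 1) (k : ℕ) :
    |log t| ^ k ≤ 2 ^ k * k.factorial * t ^ (-(1 / 2 : ℝ)) := by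
  have hlog := log_nonpos ht.le ht1
  have h := pow_div_factorial_le_exp (x := -log t / 2) (by linarith) k
  rw [div_pow, div_div, div_le_iff₀ (by positivity)] at h
  rw [abs_of_nonpos hlog, rpow_def_of_pos ht]
  calc (-log t) ^ k ≤ exp (-log t / 2) * (2 ^ k * k.factorial) := h
    _ = _ := by ring_nf

lemma integrableOn_rpow_mul_one_sub_rpow {u v : ℝ} (hu : 0 < u) (hv : 0 < v) :
    IntegrableOn (fun t : ℝ => t ^ (u - 1) * (1 - t) ^ (v - 1)) (Ioo 0 1) := by
  have h := (Complex.betaIntegral_convergent (u := u) (v := v) (by simpa) (by simpa)).norm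
  rw [intervalIntegrable_iff_integrableOn_Ioc_of_le zero_le_one] at h
  refine (h.mono_set Ioo_subset_Ioc_self).congr_fun (fun t ht => ?_) measurableSet_Ioo
  have ht1 : 0 ≤ 1 - t := by linarith [ht.2]
  simp only [← Complex.ofReal_one, ← Complex.ofReal_sub, ← Complex.ofReal_cpow ht.1.le,
    ← Complex.ofReal_cpow ht1, ← Complex.ofReal_mul, Complex.norm_real]
  exact norm_of_nonneg (mul_nonneg (rpow_nonneg ht.1.le _) (rpow_nonneg ht1 _))

lemma integrableOn_log_pow_mul_one_sub_rpow {q : ℝ} (hq : 0 < q) (k : ℕ) :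
    IntegrableOn (fun t => log t ^ k * (1 - t) ^ (q - 1)) (Ioo 0 1) := by
  refine ((integrableOn_rpow_mul_one_sub_rpow (u := 1 / 2) (by norm_num) hq).const_mul
    (2 ^ k * k.factorial)).mono' (by fun_prop) ?_
  refine (ae_restrict_iff' measurableSet_Ioo).2 (.of_forall fun t ht => ?_)
  have ht1 : 0 < 1 - t := by linarith [ht.2]
  rw [norm_mul, norm_pow, norm_eq_abs, norm_of_nonneg (by positivity), ← mul_assoc]
  have := abs_log_pow_le ht.1 ht.2.le k
  norm_num at this ⊢
  gcongr

noncomputable def logBetaIntegral (q : ℝ) (k : ℕ) (s : ℝ) : ℝ :=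
  ∫ t in Ioo 0 1, log t ^ k * t ^ (s - 1) * (1 - t) ^ (q - 1)

/-- Extended by zero to `(0, ∞)`, so that `logBetaIntegral q k` is its Mellin transform. -/
noncomputable def logBetaKernel (q : ℝ) (k : ℕ) : ℝ → ℝ :=
  (Ioo 0 1).indicator fun t => log t ^ k * (1 - t) ^ (q - 1)

lemma logBetaKernel_succ (q : ℝ) (k : ℕ) (t : ℝ) :
    logBetaKernel q (k + 1) t = log t * logBetaKernel q k t := by
  by_cases ht : t ∈ Ioo (0 : ℝ) 1
  · simp only [logBetaKernel, indicator_of_mem ht]; ring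
  · simp [logBetaKernel, indicator_of_notMem ht]

lemma integrable_logBetaKernel {q : ℝ} (hq : 0 < q) (k : ℕ) : Integrable (logBetaKernel q k) :=
  (integrable_indicator_iff measurableSet_Ioo).2 (integrableOn_log_pow_mul_one_sub_rpow hq k)

lemma logBetaKernel_isBigO_atTop (q : ℝ) (k : ℕ) (a : ℝ) :
    logBetaKernel q k =O[atTop] (· ^ (-a)) := by
  refine (isBigO_zero _ _).congr' ?_ .rfl
  filter_upwards [eventually_ge_atTop 1] with t ht
  simp [logBetaKernel, indicator_of_notMem fun h : t ∈ Ioo (0 : ℝ) 1 => h.2.not_ge ht]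

lemma logBetaKernel_isBigO_nhdsGT_zero (q : ℝ) (k : ℕ) {b : ℝ} (hb : 0 < b) :
    logBetaKernel q k =O[𝓝[>] 0] (· ^ (-b)) := by
  induction k generalizing b with
  | zero =>
    have hcont : ContinuousAt (fun t : ℝ => (1 - t) ^ (q - 1)) 0 :=
      (continuousAt_const.sub continuousAt_id).rpow_const (Or.inl (by norm_num))
    have hbdd : logBetaKernel q 0 =O[𝓝[>] 0] (fun _ => (1 : ℝ)) := by
      refine (hcont.tendsto.mono_left nhdsWithin_le_nhds).isBigO_one ℝ |>.congr' ?_ .rfl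
      filter_upwards [Ioo_mem_nhdsGT zero_lt_one] with t ht
      simp [logBetaKernel, indicator_of_mem ht]
    refine hbdd.trans (isBigO_iff.2 ⟨1, ?_⟩)
    filter_upwards [Ioc_mem_nhdsGT zero_lt_one] with t ht
    rw [norm_one, one_mul, norm_of_nonneg (rpow_nonneg ht.1.le _)]
    exact one_le_rpow_of_pos_of_le_one_of_nonpos ht.1 ht.2 (by linarith)
  | succ k ih =>
    simpa only [smul_eq_mul, ← logBetaKernel_succ] using
      isBigO_rpow_zero_log_smul (half_lt_self hb) (ih (half_pos hb))

lemma mellin_ofReal (f : ℝ → ℝ) (s : ℝ) :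
    mellin (fun t => (f t : ℂ)) s = ↑(∫ t in Ioi 0, t ^ (s - 1) * f t) := by
  rw [mellin, ← integral_complex_ofReal]
  refine setIntegral_congr_fun measurableSet_Ioi fun t ht => ?_
  rw [smul_eq_mul, ← Complex.ofReal_one, ← Complex.ofReal_sub,
    ← Complex.ofReal_cpow (le_of_lt ht), Complex.ofReal_mul]

lemma setIntegral_rpow_mul_logBetaKernel (q : ℝ) (k : ℕ) (s : ℝ) :
    ∫ t in Ioi 0, t ^ (s - 1) * logBetaKernel q k t = logBetaIntegral q k s := by
  have h (t : ℝ) : t ^ (s - 1) * logBetaKernel q k t =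
      (Ioo 0 1).indicator (fun t => log t ^ k * t ^ (s - 1) * (1 - t) ^ (q - 1)) t := by
    simp only [logBetaKernel, indicator_apply]
    split_ifs <;> ring
  simp_rw [h]
  rw [setIntegral_indicator measurableSet_Ioo, Ioi_inter_Ioo, max_self, logBetaIntegral]

lemma hasDerivAt_logBetaIntegral {q : ℝ} (hq : 0 < q) (k : ℕ) {s : ℝ} (hs : 0 < s) :
    HasDerivAt (logBetaIntegral q k) (logBetaIntegral q (k + 1) s) s := by
  have h := (mellin_hasDerivAt_of_isBigO_rpow (s := s)
    ((integrable_logBetaKernel hq k).ofReal.locallyIntegrable.locallyIntegrableOn _)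
    (Complex.isBigO_ofReal_left.2 (logBetaKernel_isBigO_atTop q k (s + 1))) (by simp)
    (Complex.isBigO_ofReal_left.2 (logBetaKernel_isBigO_nhdsGT_zero q k (half_pos hs)))
    (by simpa using half_lt_self hs)).2.real_of_complex
  simpa [Complex.real_smul, ← Complex.ofReal_mul, ← logBetaKernel_succ, mellin_ofReal,
    setIntegral_rpow_mul_logBetaKernel] using h

lemma logBetaIntegral_zero {q s : ℝ} (hq : 0 < q) (hs : 0 < s) :
    logBetaIntegral q 0 s = Gamma s * Gamma q / Gamma (s + q) := by
  have hB : (logBetaIntegral q 0 s : ℂ) = Complex.betaIntegral s q := by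
    rw [Complex.betaIntegral, intervalIntegral.integral_of_le zero_le_one,
      integral_Ioc_eq_integral_Ioo, logBetaIntegral, ← integral_complex_ofReal]
    refine setIntegral_congr_fun measurableSet_Ioo fun t ht => ?_
    have ht1 : 0 ≤ 1 - t := by linarith [ht.2]
    simp only [pow_zero, one_mul, ← Complex.ofReal_one, ← Complex.ofReal_sub,
      ← Complex.ofReal_cpow ht.1.le, ← Complex.ofReal_cpow ht1, Complex.ofReal_mul]
  have h := Complex.Gamma_mul_Gamma_eq_betaIntegral (s := s) (t := q) (by simpa) (by simpa)
  rw [← hB, ← Complex.ofReal_add, Complex.Gamma_ofReal, Complex.Gamma_ofReal,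
    Complex.Gamma_ofReal, ← Complex.ofReal_mul, ← Complex.ofReal_mul] at h
  rw [eq_div_iff (Gamma_pos_of_pos (by linarith)).ne', mul_comm]
  exact_mod_cast h.symm

lemma logBetaIntegral_zero_pos {q s : ℝ} (hq : 0 < q) (hs : 0 < s) : 0 < logBetaIntegral q 0 s := by
  rw [logBetaIntegral_zero hq hs]
  exact div_pos (mul_pos (Gamma_pos_of_pos hs) (Gamma_pos_of_pos hq))
    (Gamma_pos_of_pos (add_pos hs hq))

lemma logBetaIntegral_one_div_zero {q s : ℝ} (hq : 0 < q) (hs : 0 < s) :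
    logBetaIntegral q 1 s / logBetaIntegral q 0 s = digamma s - digamma (s + q) := by
  have hK : HasDerivAt (fun σ => log (logBetaIntegral q 0 σ))
      (logBetaIntegral q 1 s / logBetaIntegral q 0 s) s :=
    (hasDerivAt_logBetaIntegral hq 0 hs).log (logBetaIntegral_zero_pos hq hs).ne'
  have hΓ : HasDerivAt (fun σ => log (Gamma σ) + log (Gamma q) - log (Gamma (σ + q)))
      (digamma s - digamma (s + q)) s :=
    ((hasDerivAt_log_Gamma hs).add_const _).sub
      ((hasDerivAt_log_Gamma (add_pos hs hq)).comp_add_const s q)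
  refine hK.unique (hΓ.congr_of_eventuallyEq ?_)
  filter_upwards [Ioi_mem_nhds hs] with σ hσ
  have hΓσ := Gamma_pos_of_pos hσ
  have hΓq := Gamma_pos_of_pos hq
  rw [logBetaIntegral_zero hq hσ, log_div (mul_pos hΓσ hΓq).ne'
    (Gamma_pos_of_pos (add_pos hσ hq)).ne', log_mul hΓσ.ne' hΓq.ne']

lemma logBetaIntegral_variance {q s : ℝ} (hq : 0 < q) (hs : 0 < s) :
    (logBetaIntegral q 2 s * logBetaIntegral q 0 s - logBetaIntegral q 1 s ^ 2) /
      logBetaIntegral q 0 s ^ 2 = trigamma s - trigamma (s + q) := by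
  have hK : HasDerivAt (fun σ => logBetaIntegral q 1 σ / logBetaIntegral q 0 σ)
      ((logBetaIntegral q 2 s * logBetaIntegral q 0 s - logBetaIntegral q 1 s ^ 2) /
        logBetaIntegral q 0 s ^ 2) s := by
    simpa only [sq] using (hasDerivAt_logBetaIntegral hq 1 hs).fun_div
      (hasDerivAt_logBetaIntegral hq 0 hs) (logBetaIntegral_zero_pos hq hs).ne'
  have hψ : HasDerivAt (fun σ => digamma σ - digamma (σ + q)) (trigamma s - trigamma (s + q)) s :=
    (hasDerivAt_digamma hs).sub ((hasDerivAt_digamma (add_pos hs hq)).comp_add_const s q)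
  refine hK.unique (hψ.congr_of_eventuallyEq ?_)
  filter_upwards [Ioi_mem_nhds hs] with σ hσ
  exact logBetaIntegral_one_div_zero hq hσ

lemma image_Ioo_inv_sub_one {r : ℝ} (hr : 0 < r) :
    (fun t : ℝ => r * (t⁻¹ - 1)) '' Ioo 0 1 = Ioi 0 := by
  ext y
  constructor
  · rintro ⟨t, ⟨ht0, ht1⟩, rfl⟩
    exact mul_pos hr (sub_pos.2 (one_lt_inv₀ ht0 |>.2 ht1))
  · intro (hy : 0 < y)
    refine ⟨r / (y + r), ⟨by positivity, (div_lt_one (by positivity)).2 (by linarith)⟩, ?_⟩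
    field_simp
    ring

lemma injOn_inv_sub_one {r : ℝ} (hr : 0 < r) : InjOn (fun t : ℝ => r * (t⁻¹ - 1)) (Ioo 0 1) :=
  fun _ _ _ _ h => inv_injective (sub_left_injective (mul_left_cancel₀ hr.ne' h))

lemma one_add_mul_inv_sub_one {a c : ℝ} (ha : a ≠ 0) (hc : c ≠ 0) (t : ℝ) :
    1 + a * (c / a * (t⁻¹ - 1)) / c = t⁻¹ := by
  field_simp
  ring

lemma fDensity_comp_inv_sub_one {a c t : ℝ} (ha : 0 < a) (hc : 0 < c) (ht : t ∈ Ioo (0 : ℝ) 1) :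
    c / a * (t ^ 2)⁻¹ * fDensity a c (c / a * (t⁻¹ - 1)) =
      Gamma ((a + c) / 2) / (Gamma (a / 2) * Gamma (c / 2)) *
        (t ^ (c / 2 - 1) * (1 - t) ^ (a / 2 - 1)) := by
  obtain ⟨ht0, ht1⟩ := ht
  have h1t : 0 < 1 - t := by linarith
  have hx : c / a * (t⁻¹ - 1) = (a / c)⁻¹ * ((1 - t) * t⁻¹) := by field_simp
  rw [fDensity, one_add_mul_inv_sub_one ha.ne' hc.ne', hx, mul_rpow (by positivity) (by positivity),
    mul_rpow h1t.le (by positivity), inv_rpow (by positivity), inv_rpow ht0.le,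
    inv_rpow ht0.le, ← rpow_neg ht0.le, ← rpow_neg ht0.le, rpow_sub_one (by positivity),
    ← rpow_natCast, ← rpow_neg ht0.le]
  have ht_exp : t ^ (-((2 : ℕ) : ℝ)) * t ^ (-(a / 2 - 1)) * t ^ (-(-((a + c) / 2))) =
      t ^ (c / 2 - 1) := by
    rw [← rpow_add ht0, ← rpow_add ht0]; congr 1; push_cast; ring
  have hac : (a / c) ^ (a / 2) ≠ 0 := by positivity
  rw [← ht_exp]
  field_simp

lemma setIntegral_log_pow_mul_fDensity {a c : ℝ} (ha : 0 < a) (hc : 0 < c) (k : ℕ) :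
    ∫ x in Ioi 0, log (1 + a * x / c) ^ k * fDensity a c x =
      (-1) ^ k * logBetaIntegral (a / 2) k (c / 2) / logBetaIntegral (a / 2) 0 (c / 2) := by
  have hr : 0 < c / a := div_pos hc ha
  have hderiv : ∀ t ∈ Ioo (0 : ℝ) 1, HasDerivWithinAt (fun t => c / a * (t⁻¹ - 1))
      (c / a * -(t ^ 2)⁻¹) (Ioo 0 1) t := fun t ht =>
    (((hasDerivAt_inv ht.1.ne').sub_const 1).const_mul (c / a)).hasDerivWithinAt
  have hK : (-1) ^ k * logBetaIntegral (a / 2) k (c / 2) / logBetaIntegral (a / 2) 0 (c / 2) =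
      ∫ t in Ioo 0 1, (-1) ^ k * log t ^ k * (Gamma ((a + c) / 2) /
        (Gamma (a / 2) * Gamma (c / 2)) * (t ^ (c / 2 - 1) * (1 - t) ^ (a / 2 - 1))) := by
    have hΓ := Gamma_pos_of_pos (half_pos ha)
    have hΓ' := Gamma_pos_of_pos (half_pos hc)
    have hΓ'' := Gamma_pos_of_pos (half_pos (add_pos ha hc))
    rw [logBetaIntegral_zero (half_pos ha) (half_pos hc), ← add_div, add_comm c,
      logBetaIntegral, ← integral_const_mul, ← integral_div]
    refine setIntegral_congr_fun measurableSet_Ioo fun t _ => ?_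
    field_simp
  rw [← image_Ioo_inv_sub_one hr, integral_image_eq_integral_abs_deriv_smul measurableSet_Ioo
    hderiv (injOn_inv_sub_one hr), hK]
  refine setIntegral_congr_fun measurableSet_Ioo fun t ht => ?_
  rw [smul_eq_mul, abs_mul, abs_neg, abs_of_pos hr, abs_of_pos (inv_pos.2 (pow_pos ht.1 2)),
    one_add_mul_inv_sub_one ha.ne' hc.ne', log_inv, neg_pow, ← fDensity_comp_inv_sub_one ha hc ht]
  ring

theorem stmt_7 (b N : ℕ) (hb : 1 ≤ b) (hN : b + 2 ≤ N) :
    (∫ x in Set.Ioi (0 : ℝ),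
        ((N : ℝ) * Real.log (1 + (b : ℝ) * x / ((N : ℝ) - b - 1))) ^ 2 *
          fDensity (b : ℝ) ((N : ℝ) - b - 1) x)
      - (∫ x in Set.Ioi (0 : ℝ),
          (N : ℝ) * Real.log (1 + (b : ℝ) * x / ((N : ℝ) - b - 1)) *
            fDensity (b : ℝ) ((N : ℝ) - b - 1) x) ^ 2
      = (N : ℝ) ^ 2 *
          (trigamma (((N : ℝ) - b - 1) / 2) - trigamma (((N : ℝ) - 1) / 2)) := by
  have ha : (0 : ℝ) < b := by exact_mod_cast hb
  have hc : (0 : ℝ) < N - b - 1 := by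
    have : (b : ℝ) + 2 ≤ N := by exact_mod_cast hN
    linarith
  have hK₀ := (logBetaIntegral_zero_pos (half_pos ha) (half_pos hc)).ne'
  have h₁ := setIntegral_log_pow_mul_fDensity ha hc 1
  have h₂ := setIntegral_log_pow_mul_fDensity ha hc 2
  simp only [pow_one] at h₁
  simp_rw [mul_pow, mul_assoc]
  rw [integral_const_mul, integral_const_mul, h₁, h₂,
    show ((N : ℝ) - 1) / 2 = (N - b - 1) / 2 + b / 2 by ring,
    ← logBetaIntegral_variance (half_pos ha) (half_pos hc)]
  field_simp
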